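/- Let N ≥ 4 be an integer, α ∈ (0,1), and suppose the real sequences x_0,…,x_{N−3} and y_0,…,y_{N−2} solve the absorption system. Then for all 1 ≤ k ≤ N−3, x_k − x_{k−1} = ( N²(1+α) − (2k+1)(1+α)N − 2α + 2 ) / ( 4(1−α) ), and for all 1 ≤ k ≤ N−2, y_k − y_{k−1} = ( N²(α+1) − N((2k+3)α + (2k−1)) − 2α + 2 ) / ( 4(1−α) ). -/
import Mathlib

/-- The sequences `x_0,…,x_{N−3}` and `y_0,…,y_{N−2}` solve the absorption
(expected-hitting-time) system with `ρ = (1−α)/2`: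
(i) `y_0 − α·y_{N−2} = 1`;
(ii) `x_k − (1−ρ)·y_k − ρ·x_{N−k−3} = 1 + kρ` for `0 ≤ k ≤ N−3`;
(iii) `y_k − ρ·y_{k−1} − (1−ρ)·x_{N−k−2} = k − (k−1)ρ` for `1 ≤ k ≤ N−2`. -/
def solvesAbsorption (N : ℕ) (α : ℝ) (x y : ℕ → ℝ) : Prop :=
  y 0 - α * y (N - 2) = 1 ∧
  (∀ k : ℕ, k ≤ N - 3 →
    x k - (1 - (1 - α) / 2) * y k - (1 - α) / 2 * x (N - k - 3) =
      1 + (k : ℝ) * ((1 - α) / 2)) ∧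
  (∀ k : ℕ, 1 ≤ k → k ≤ N - 2 →
    y k - (1 - α) / 2 * y (k - 1) - (1 - (1 - α) / 2) * x (N - k - 2) =
      (k : ℝ) - ((k : ℝ) - 1) * ((1 - α) / 2))

/-- Numerator polynomial for the `y`-differences. -/
def PyAux (N : ℕ) (α t : ℝ) : ℝ :=
  (N : ℝ) ^ 2 * (α + 1) - (N : ℝ) * ((2 * t + 3) * α + (2 * t - 1)) - 2 * α + 2

/-- Successive differences of the solutions of the absorption system. -/
theorem stmt19 (N : ℕ) (hN : 4 ≤ N) (α : ℝ) (hα : α ∈ Set.Ioo (0 : ℝ) 1)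
    (x y : ℕ → ℝ) (h : solvesAbsorption N α x y) :
    (∀ k : ℕ, 1 ≤ k → k ≤ N - 3 →
      x k - x (k - 1) =
        ((N : ℝ) ^ 2 * (1 + α) - (2 * (k : ℝ) + 1) * (1 + α) * (N : ℝ) - 2 * α + 2) /
          (4 * (1 - α))) ∧
    (∀ k : ℕ, 1 ≤ k → k ≤ N - 2 →
      y k - y (k - 1) =
        ((N : ℝ) ^ 2 * (α + 1) -
            (N : ℝ) * ((2 * (k : ℝ) + 3) * α + (2 * (k : ℝ) - 1)) - 2 * α + 2) /
          (4 * (1 - α))) := by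
  obtain ⟨-, h2, h3⟩ := h
  obtain ⟨ha0, ha1⟩ := hα
  have hNe : (1 : ℝ) - α ≠ 0 := by linarith
  have h4ne : (4 : ℝ) * (1 - α) ≠ 0 := by
    intro hc; apply hNe; linarith
  have h3ne : (3 : ℝ) - α ≠ 0 := by linarith
  have h1ne : (1 : ℝ) + α ≠ 0 := by linarith
  have csub : ∀ m : ℕ, m ≤ N → ((N - m : ℕ) : ℝ) = (N : ℝ) - (m : ℝ) := by
    intro m hm; rw [Nat.cast_sub hm]
  -- partial sums of (ii)_k + (iii)_k
  have Hsum : ∀ m : ℕ, 1 ≤ m → m ≤ N - 3 →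
      2 * (∑ k ∈ Finset.Icc 1 m, x k) - 2 * (∑ k ∈ Finset.Icc 1 m, x (N - 2 - k))
        + (1 - α) * (y m - y 0) - (1 - α) * x (N - m - 3) + (1 - α) * x (N - 3)
        = (m : ℝ) * (3 - α) + (m : ℝ) * ((m : ℝ) + 1) := by
    intro m hm1
    induction m, hm1 using Nat.le_induction with
    | base =>
      intro _
      have H2 := h2 1 (by omega)
      have H3 := h3 1 (by omega) (by omega)
      rw [show (1 : ℕ) - 1 = 0 from rfl, show N - 1 - 2 = N - 3 from by omega] at H3
      simp only [Finset.Icc_self, Finset.sum_singleton]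
      rw [show N - 2 - 1 = N - 3 from by omega]
      push_cast at H2 H3 ⊢
      linear_combination 2 * H2 + 2 * H3
    | succ m hm ih =>
      intro hm2
      have ih' := ih (by omega)
      have H2 := h2 (m + 1) (by omega)
      have H3 := h3 (m + 1) (by omega) (by omega)
      rw [show m + 1 - 1 = m from rfl, show N - (m + 1) - 2 = N - m - 3 from by omega] at H3
      rw [Finset.sum_Icc_succ_top (by omega : 1 ≤ m + 1),
          Finset.sum_Icc_succ_top (by omega : 1 ≤ m + 1),
          show N - 2 - (m + 1) = N - m - 3 from by omega,
          show N - (m + 1) - 3 = N - (m + 1) - 3 from rfl]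
      rw [show N - (m + 1) - 3 = N - (m + 1) - 3 from rfl] at H2
      push_cast at H2 H3 ⊢
      linear_combination ih' + 2 * H2 + 2 * H3
  -- the reflected sum equals the plain sum
  have hsum_eq : ∑ k ∈ Finset.Icc 1 (N - 3), x (N - 2 - k)
      = ∑ k ∈ Finset.Icc 1 (N - 3), x k := by
    refine Finset.sum_nbij' (fun k => N - 2 - k) (fun k => N - 2 - k) ?_ ?_ ?_ ?_ ?_
    · intro a ha; simp only [Finset.mem_Icc] at ha ⊢; omega
    · intro a ha; simp only [Finset.mem_Icc] at ha ⊢; omega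
    · intro a ha; simp only [Finset.mem_Icc] at ha; omega
    · intro a ha; simp only [Finset.mem_Icc] at ha; omega
    · intro a ha; rfl
  have R2 : (1 - α) * (y (N - 3) - y 0) - (1 - α) * x 0 + (1 - α) * x (N - 3)
      = ((N : ℝ) - 3) * (3 - α) + ((N : ℝ) - 3) * ((N : ℝ) - 2) := by
    have H := Hsum (N - 3) (by omega) le_rfl
    rw [hsum_eq, show N - (N - 3) - 3 = 0 from by omega, csub 3 (by omega)] at H
    linear_combination H
  -- boundary instances
  have B1 := h3 1 (by omega) (by omega)
  rw [show (1 : ℕ) - 1 = 0 from rfl, show N - 1 - 2 = N - 3 from by omega] at B1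
  have B2 := h3 (N - 2) (by omega) (by omega)
  rw [show N - 2 - 1 = N - 3 from by omega, show N - (N - 2) - 2 = 0 from by omega,
      csub 2 (by omega)] at B2
  have A0 := h2 0 (by omega)
  rw [show N - 0 - 3 = N - 3 from by omega] at A0
  have A1 := h2 (N - 3) (by omega)
  rw [show N - (N - 3) - 3 = 0 from by omega, csub 3 (by omega)] at A1
  have R1 : y 1 - y 0 + (y (N - 2) - y (N - 3)) = (N : ℝ) + 1 := by
    push_cast at A0 B1 ⊢
    linear_combination A0 + A1 + B1 + B2
  -- main induction on pairs
  have KeyPair : ∀ k : ℕ, 1 ≤ k → k ≤ N - 2 →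
      4 * (1 - α) * (y k - y (k - 1)) = PyAux N α (k : ℝ) ∧
      4 * (1 - α) * (y (N - 1 - k) - y (N - 2 - k)) = PyAux N α ((N : ℝ) - 1 - (k : ℝ)) := by
    intro k hk1
    induction k, hk1 using Nat.le_induction with
    | base =>
      intro _
      constructor
      · rw [show (1 : ℕ) - 1 = 0 from rfl]
        simp only [PyAux]
        push_cast at B1 ⊢
        linear_combination (2 * (1 - α)) * R1 + (2 * (1 - α)) * B1 - (2 * (1 - α)) * B2
          + (1 + α) * R2
      · rw [show N - 1 - 1 = N - 2 from by omega, show N - 2 - 1 = N - 3 from by omega]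
        simp only [PyAux]
        push_cast at B1 ⊢
        linear_combination (2 * (1 - α)) * R1 - (2 * (1 - α)) * B1 + (2 * (1 - α)) * B2
          - (1 + α) * R2
    | succ k hk ih =>
      intro hk2
      obtain ⟨ih1, ih2⟩ := ih (by omega)
      rw [show N - 1 - k = N - k - 1 from by omega, show N - 2 - k = N - k - 2 from by omega]
        at ih2
      -- instances
      have H3a := h3 (N - k - 1) (by omega) (by omega)
      rw [show N - k - 1 - 1 = N - k - 2 from by omega,
          show N - (N - k - 1) - 2 = k - 1 from by omega,
          show ((N - k - 1 : ℕ) : ℝ) = (N : ℝ) - (k : ℝ) - 1 from by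
            rw [show N - k - 1 = N - (k + 1) from by omega, Nat.cast_sub (by omega)]
            push_cast; ring] at H3a
      have H3b := h3 (N - k - 2) (by omega) (by omega)
      rw [show N - k - 2 - 1 = N - k - 3 from by omega,
          show N - (N - k - 2) - 2 = k from by omega,
          show ((N - k - 2 : ℕ) : ℝ) = (N : ℝ) - (k : ℝ) - 2 from by
            rw [show N - k - 2 = N - (k + 2) from by omega, Nat.cast_sub (by omega)]
            push_cast; ring] at H3b
      have H2a := h2 k (by omega)
      have H2b := h2 (k - 1) (by omega)
      rw [show N - (k - 1) - 3 = N - k - 2 from by omega,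
          show ((k - 1 : ℕ) : ℝ) = (k : ℝ) - 1 from by
            rw [Nat.cast_sub hk]; push_cast; ring] at H2b
      have H2c := h2 (N - k - 2) (by omega)
      rw [show N - (N - k - 2) - 3 = k - 1 from by omega,
          show ((N - k - 2 : ℕ) : ℝ) = (N : ℝ) - (k : ℝ) - 2 from by
            rw [show N - k - 2 = N - (k + 2) from by omega, Nat.cast_sub (by omega)]
            push_cast; ring] at H2c
      have H2d := h2 (N - k - 3) (by omega)
      rw [show N - (N - k - 3) - 3 = k from by omega,
          show ((N - k - 3 : ℕ) : ℝ) = (N : ℝ) - (k : ℝ) - 3 from by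
            rw [show N - k - 3 = N - (k + 3) from by omega, Nat.cast_sub (by omega)]
            push_cast; ring] at H2d
      have hF : ((3 - α) / 2) * (y (N - k - 1) - y (N - k - 2))
          - (1 - α) * (y (N - k - 2) - y (N - k - 3))
          + ((1 + α) / 2) * (y k - y (k - 1)) = (1 + α) / 2 := by
        linear_combination ((3 - α) / 2) * H3a - ((3 - α) / 2) * H3b - H2a + H2b
          + ((1 - α) / 2) * H2c - ((1 - α) / 2) * H2d
      have hB : 4 * (1 - α) * (y (N - k - 2) - y (N - k - 3))
          = PyAux N α ((N : ℝ) - (k : ℝ) - 2) := by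
        apply mul_left_cancel₀ hNe
        simp only [PyAux] at ih1 ih2 ⊢
        linear_combination (-4 * (1 - α)) * hF + ((3 - α) / 2) * ih2 + ((1 + α) / 2) * ih1
      constructor
      · rw [show k + 1 - 1 = k from rfl]
        have H3c := h3 (k + 1) (by omega) (by omega)
        rw [show k + 1 - 1 = k from rfl, show N - (k + 1) - 2 = N - k - 3 from by omega] at H3c
        have H3d := h3 k hk (by omega)
        have hF2 : ((3 - α) / 2) * (y (k + 1) - y k)
            - (1 - α) * (y k - y (k - 1))
            + ((1 + α) / 2) * (y (N - k - 2) - y (N - k - 3)) = (1 + α) / 2 := by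
          push_cast at H3c
          linear_combination ((3 - α) / 2) * H3c - ((3 - α) / 2) * H3d - H2c + H2d
            + ((1 - α) / 2) * H2a - ((1 - α) / 2) * H2b
        apply mul_left_cancel₀ h3ne
        simp only [PyAux] at ih1 hB ⊢
        push_cast
        linear_combination (8 * (1 - α)) * hF2 + (2 * (1 - α)) * ih1 - (1 + α) * hB
      · rw [show N - 1 - (k + 1) = N - k - 2 from by omega,
            show N - 2 - (k + 1) = N - k - 3 from by omega]
        simp only [PyAux] at hB ⊢
        push_cast
        linear_combination hB
  refine ⟨?_, ?_⟩
  · -- x-differences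
    intro k hk1 hk3
    have K1 := (KeyPair k hk1 (by omega)).1
    have K2 := (KeyPair (N - k - 2) (by omega) (by omega)).1
    rw [show N - k - 2 - 1 = N - k - 3 from by omega,
        show ((N - k - 2 : ℕ) : ℝ) = (N : ℝ) - (k : ℝ) - 2 from by
          rw [show N - k - 2 = N - (k + 2) from by omega, Nat.cast_sub (by omega)]
          push_cast; ring] at K2
    have H2a := h2 k (by omega)
    have H2b := h2 (k - 1) (by omega)
    rw [show N - (k - 1) - 3 = N - k - 2 from by omega,
        show ((k - 1 : ℕ) : ℝ) = (k : ℝ) - 1 from by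
          rw [Nat.cast_sub hk1]; push_cast; ring] at H2b
    have H2c := h2 (N - k - 2) (by omega)
    rw [show N - (N - k - 2) - 3 = k - 1 from by omega,
        show ((N - k - 2 : ℕ) : ℝ) = (N : ℝ) - (k : ℝ) - 2 from by
          rw [show N - k - 2 = N - (k + 2) from by omega, Nat.cast_sub (by omega)]
          push_cast; ring] at H2c
    have H2d := h2 (N - k - 3) (by omega)
    rw [show N - (N - k - 3) - 3 = k from by omega,
        show ((N - k - 3 : ℕ) : ℝ) = (N : ℝ) - (k : ℝ) - 3 from by
          rw [show N - k - 3 = N - (k + 3) from by omega, Nat.cast_sub (by omega)]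
          push_cast; ring] at H2d
    rw [eq_div_iff h4ne]
    apply mul_left_cancel₀ (mul_ne_zero h1ne h3ne)
    simp only [PyAux] at K1 K2
    linear_combination (16 * (1 - α)) * H2a - (16 * (1 - α)) * H2b
      - (8 * (1 - α) ^ 2) * H2c + (8 * (1 - α) ^ 2) * H2d
      + (2 * (1 + α)) * K1 - ((1 + α) * (1 - α)) * K2
  · -- y-differences
    intro k hk1 hk2
    have K := (KeyPair k hk1 hk2).1
    rw [eq_div_iff h4ne]
    simp only [PyAux] at K
    linear_combination K
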